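/- arXiv:1704.00982 — 2 statements merged into one kernel-verified Lean document; each statement's English description precedes it below -/
import Mathlib

section
/- Let a : ℕ → ℂ be such that a(n) lies in a wedge W(θ₁,θ₂) with 0 ≤ θ₂ − θ₁ < π for all but finitely many n ≥ 1, and suppose the Dirichlet series L(s) = Σ_{n≥1} a(n)/n^s has finite abscissa of convergence σ_c. Then L(s) cannot be continued analytically to any open neighborhood of the real point s = σ_c; that is, σ_c is a singularity of L. -/
open Complex Real Filter Topology
open scoped Classical

/-- The wedge `W(θ₁,θ₂) = {r·e^{iθ} : r ≥ 0, θ ∈ [θ₁,θ₂]}`. -/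
def Wedge (θ₁ θ₂ : ℝ) : Set ℂ :=
  {z : ℂ | ∃ r θ : ℝ, 0 ≤ r ∧ θ₁ ≤ θ ∧ θ ≤ θ₂ ∧ z = r * Complex.exp (θ * Complex.I)}

/-- The Dirichlet series `Σ_{n≥1} a(n) n^{-s}` converges at `s` (in the sense of
convergence of partial sums). -/
def DirichletConvAt (a : ℕ → ℂ) (s : ℂ) : Prop :=
  ∃ l : ℂ, Tendsto (fun N => ∑ n ∈ Finset.Icc 1 N, a n / (n : ℂ) ^ s) atTop (𝓝 l)

/-- The sum of the Dirichlet series at a point of convergence. -/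
noncomputable def DirichletSum (a : ℕ → ℂ) (s : ℂ) : ℂ :=
  if h : DirichletConvAt a s then h.choose else 0

/-!
Rotating by `e = exp (-iφ)`, with `φ` the bisector of the wedge, gives `c ‖a n‖ ≤ Re (e a n)` for
large `n`, where `c = cos (opening / 2) > 0`. So convergence at a real `x` forces absolute
convergence there, and `σc` is also the abscissa of absolute convergence. If `L` continued
holomorphically to a disc around `σc`, expand it in a Taylor series at a real `x₀ > σc` and evaluate
at `x₀ - ρ < σc`: the `k`-th term is `ρ ^ k / k! * ∑ₙ (log n) ^ k a n n ^ (-x₀)`. After rotating by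
`e`, every term of this double series has nonnegative real part, so it may be summed over `k`
first, which gives `∑ₙ Re (e a n) n ^ (ρ - x₀) < ∞` and hence absolute convergence left of `σc`.
The finitely many coefficients outside the wedge only change `L` by an entire function.
-/

theorem cos_mul_norm_le_re_of_mem_Wedge {θ₁ θ₂ : ℝ} (h : θ₂ - θ₁ ≤ 2 * π) {z : ℂ}
    (hz : z ∈ Wedge θ₁ θ₂) :
    Real.cos ((θ₂ - θ₁) / 2) * ‖z‖ ≤ (exp (-(((θ₁ + θ₂) / 2 : ℝ) : ℂ) * I) * z).re := by
  obtain ⟨r, θ, hr, hθ₁, hθ₂, rfl⟩ := hz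
  have hnorm : ‖(r : ℂ) * exp (θ * I)‖ = r := by
    rw [norm_mul, norm_exp_ofReal_mul_I, norm_real, Real.norm_of_nonneg hr, mul_one]
  have hre : (exp (-(((θ₁ + θ₂) / 2 : ℝ) : ℂ) * I) * (r * exp (θ * I))).re
      = r * Real.cos (θ - (θ₁ + θ₂) / 2) := by
    rw [mul_left_comm, ← Complex.exp_add, ← add_mul, ← ofReal_neg, ← ofReal_add, re_ofReal_mul,
      exp_ofReal_mul_I_re, neg_add_eq_sub]
  have hcos : Real.cos ((θ₂ - θ₁) / 2) ≤ Real.cos (θ - (θ₁ + θ₂) / 2) := by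
    rw [← Real.cos_abs (θ - _)]
    exact Real.cos_le_cos_of_nonneg_of_le_pi (abs_nonneg _) (by linarith)
      (abs_le.mpr ⟨by linarith, by linarith⟩)
  rw [hnorm, hre, mul_comm]
  exact mul_le_mul_of_nonneg_left hcos hr

theorem summable_of_tendsto_sum_range_of_eventually_nonneg {f : ℕ → ℝ} {l : ℝ}
    (hf : ∀ᶠ n in atTop, 0 ≤ f n) (h : Tendsto (fun N ↦ ∑ n ∈ Finset.range N, f n) atTop (𝓝 l)) :
    Summable f := by
  obtain ⟨N, hN⟩ := eventually_atTop.mp hf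
  obtain ⟨C, hC⟩ := h.bddAbove_range
  rw [← summable_nat_add_iff N]
  refine summable_of_sum_range_le (c := C - ∑ n ∈ Finset.range N, f n)
    (fun n ↦ hN _ (Nat.le_add_left N n)) fun m ↦ ?_
  have := Finset.sum_range_add_sub_sum_range f N m
  simp only [add_comm _ N] at this ⊢
  rw [← this]
  linarith [hC (Set.mem_range_self (N + m))]

section Cone

variable {f : ℕ → ℂ} {e : ℂ} {c : ℝ}

theorem summable_of_summable_re_mul (hc : 0 < c) (hf : ∀ᶠ n in atTop, c * ‖f n‖ ≤ (e * f n).re)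
    (hre : Summable fun n ↦ (e * f n).re) : Summable f := by
  refine (hre.mul_left c⁻¹).of_norm_bounded_eventually_nat (hf.mono fun n hn ↦ ?_)
  rwa [le_inv_mul_iff₀ hc]

theorem summable_of_tendsto_sum_range (hc : 0 < c) (hf : ∀ᶠ n in atTop, c * ‖f n‖ ≤ (e * f n).re)
    {l : ℂ} (h : Tendsto (fun N ↦ ∑ n ∈ Finset.range N, f n) atTop (𝓝 l)) : Summable f := by
  refine summable_of_summable_re_mul hc hf (summable_of_tendsto_sum_range_of_eventually_nonneg
    (hf.mono fun n hn ↦ (by positivity : 0 ≤ c * ‖f n‖).trans hn) (l := (e * l).re) ?_)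
  simpa only [Finset.mul_sum, Function.comp_def, re_sum] using
    (continuous_re.tendsto _).comp (h.const_mul e)

theorem mul_norm_le_re_mul_ofReal_mul {z : ℂ} (h : c * ‖z‖ ≤ (e * z).re) {r : ℝ} (hr : 0 ≤ r) :
    c * ‖(r : ℂ) * z‖ ≤ (e * (r * z)).re := by
  rw [mul_left_comm, re_ofReal_mul, norm_mul, norm_real, Real.norm_of_nonneg hr, mul_left_comm]
  exact mul_le_mul_of_nonneg_left h hr

end Cone

theorem tendsto_sum_Icc_div_cpow_iff {a : ℕ → ℂ} {s l : ℂ} :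
    Tendsto (fun N ↦ ∑ n ∈ Finset.Icc 1 N, a n / (n : ℂ) ^ s) atTop (𝓝 l) ↔
      Tendsto (fun N ↦ ∑ n ∈ Finset.range N, LSeries.term a s n) atTop (𝓝 l) := by
  rw [← tendsto_add_atTop_iff_nat (f := fun N ↦ ∑ n ∈ Finset.range N, LSeries.term a s n) 1]
  refine tendsto_congr fun N ↦ ?_
  rw [Finset.range_eq_Ico, Finset.sum_eq_sum_Ico_succ_bot (Nat.succ_pos N), LSeries.term_zero,
    zero_add]
  exact Finset.sum_congr rfl fun n hn ↦ (LSeries.term_of_ne_zero (by grind) a s).symm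

theorem dirichletConvAt_iff {a : ℕ → ℂ} {s : ℂ} : DirichletConvAt a s ↔
    ∃ l, Tendsto (fun N ↦ ∑ n ∈ Finset.range N, LSeries.term a s n) atTop (𝓝 l) := by
  simp only [DirichletConvAt, tendsto_sum_Icc_div_cpow_iff]

theorem LSeriesSummable.dirichletConvAt {a : ℕ → ℂ} {s : ℂ} (h : LSeriesSummable a s) :
    DirichletConvAt a s :=
  dirichletConvAt_iff.mpr ⟨_, h.hasSum.tendsto_sum_nat⟩

theorem LSeriesSummable.dirichletSum_eq {a : ℕ → ℂ} {s : ℂ} (h : LSeriesSummable a s) :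
    DirichletSum a s = LSeries a s := by
  rw [DirichletSum, dif_pos h.dirichletConvAt]
  exact tendsto_nhds_unique h.dirichletConvAt.choose_spec
    (tendsto_sum_Icc_div_cpow_iff.mpr h.hasSum.tendsto_sum_nat)

namespace LSeries

theorem mul_norm_term_le_re_mul_term {a : ℕ → ℂ} {e : ℂ} {c : ℝ} {n : ℕ}
    (h : c * ‖a n‖ ≤ (e * a n).re) (x : ℝ) : c * ‖term a x n‖ ≤ (e * term a x n).re := by
  rcases eq_or_ne n 0 with rfl | hn
  · simp
  rw [term_of_ne_zero hn, ← ofReal_natCast, ← ofReal_cpow n.cast_nonneg, div_eq_inv_mul,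
    ← ofReal_inv]
  exact mul_norm_le_re_mul_ofReal_mul h (by positivity)

theorem term_logMul_iterate (a : ℕ → ℂ) (s : ℂ) (k n : ℕ) :
    term (logMul^[k] a) s n = ((Real.log n ^ k : ℝ) : ℂ) * term a s n := by
  induction k with
  | zero => simp
  | succ k ih =>
    rcases eq_or_ne n 0 with rfl | hn
    · simp
    rw [Function.iterate_succ_apply', term_of_ne_zero hn, logMul, mul_div_assoc,
      ← term_of_ne_zero hn, ih, ← natCast_log]
    push_cast
    ring

theorem term_sub_eq_exp_mul (a : ℕ → ℂ) (s w : ℂ) (n : ℕ) :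
    term a (s - w) n = Complex.exp (w * Complex.log n) * term a s n := by
  rcases eq_or_ne n 0 with rfl | hn
  · simp
  have hn' : (n : ℂ) ≠ 0 := Nat.cast_ne_zero.mpr hn
  rw [term_of_ne_zero hn, term_of_ne_zero hn, cpow_sub _ _ hn', cpow_def_of_ne_zero hn' w]
  field_simp

theorem differentiable_of_eventually_eq_zero {a : ℕ → ℂ} (ha : a =ᶠ[atTop] 0) :
    Differentiable ℂ (LSeries a) := by
  have habs : abscissaOfAbsConv a = ⊥ := by
    rw [abscissaOfAbsConv_congr' ha, eq_bot_iff]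
    exact abscissaOfAbsConv_le_of_forall_lt_LSeriesSummable' fun _ _ ↦ LSeriesSummable_zero
  exact fun s ↦ (LSeries_hasDerivAt (habs ▸ EReal.bot_lt_coe s.re)).differentiableAt

open Nat in
theorem summable_re_mul_term_sub_of_differentiableOn_ball {a : ℕ → ℂ} {e : ℂ}
    (ha : ∀ n, 0 ≤ (e * a n).re) {x₀ r ρ : ℝ} (hx₀ : abscissaOfAbsConv a < x₀) {f : ℂ → ℂ}
    (hf : DifferentiableOn ℂ f (Metric.ball x₀ r)) (hfa : f =ᶠ[𝓝 (x₀ : ℂ)] LSeries a)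
    (hρ : 0 ≤ ρ) (hρr : ρ < r) :
    Summable fun n ↦ (e * term a (x₀ - ρ) n).re := by
  set G : ℕ × ℕ → ℝ := fun p ↦ ρ ^ p.1 / p.1 ! * (e * term (logMul^[p.1] a) x₀ p.2).re
  have hG : 0 ≤ G := fun ⟨k, n⟩ ↦ by
    have : 0 ≤ (e * term a x₀ n).re := by
      simpa using mul_norm_term_le_re_mul_term (c := 0) (by simpa using ha n) x₀
    simp only [G, term_logMul_iterate, mul_left_comm e, re_ofReal_mul]
    have := Real.log_natCast_nonneg n
    positivity
  have hrow (k : ℕ) :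
      HasSum (fun n ↦ G (k, n)) (ρ ^ k / k ! * (e * LSeries (logMul^[k] a) x₀).re) := by
    have hk : abscissaOfAbsConv (logMul^[k] a) < (x₀ : ℂ).re := by simpa using hx₀
    exact (hasSum_re ((LSeriesSummable_of_abscissaOfAbsConv_lt_re hk).LSeriesHasSum.mul_left e))
      |>.mul_left _
  -- Taylor's formula at `x₀`, evaluated at `x₀ - ρ`: its `k`-th term is the sum of row `k` of `G`.
  have hcol_sum : HasSum (fun k ↦ ρ ^ k / k ! * (e * LSeries (logMul^[k] a) x₀).re)
      (e * f (x₀ - ρ)).re := by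
    have hmem : (x₀ - ρ : ℂ) ∈ Metric.ball (x₀ : ℂ) r := by
      rw [Metric.mem_ball, Complex.dist_eq, sub_sub_cancel_left, norm_neg, norm_real,
        Real.norm_of_nonneg hρ]
      exact hρr
    refine (hasSum_re ((Complex.hasSum_taylorSeries_on_ball hf hmem).mul_left e)).congr_fun
      fun k ↦ ?_
    have hx₀' : abscissaOfAbsConv a < (x₀ : ℂ).re := by simpa using hx₀
    rw [hfa.iteratedDeriv_eq, LSeries_iteratedDeriv k hx₀', sub_sub_cancel_left, smul_eq_mul,
      smul_eq_mul, ← mul_assoc ((-ρ : ℂ) ^ k), ← mul_pow, neg_mul_neg, mul_one, ← re_ofReal_mul,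
      mul_left_comm]
    push_cast
    rw [div_eq_inv_mul, mul_assoc]
  have hcol (n : ℕ) : HasSum (fun k ↦ G (k, n)) (e * term a (x₀ - ρ) n).re := by
    have hexp := NormedSpace.expSeries_div_hasSum_exp (ρ * Real.log n)
    rw [← Real.exp_eq_exp_ℝ] at hexp
    rw [term_sub_eq_exp_mul, ← natCast_log, ← ofReal_mul, ← ofReal_exp, mul_left_comm,
      re_ofReal_mul]
    refine (hexp.mul_right (e * term a x₀ n).re).congr_fun fun k ↦ ?_
    simp only [G, term_logMul_iterate, mul_left_comm e, re_ofReal_mul]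
    ring
  have hGsum : Summable G := (summable_prod_of_nonneg hG).mpr
    ⟨fun k ↦ (hrow k).summable, hcol_sum.summable.congr fun k ↦ (hrow k).tsum_eq.symm⟩
  exact hGsum.prod_symm.prod.congr fun n ↦ (hcol n).tsum_eq

variable {a : ℕ → ℂ} {e : ℂ} {c : ℝ}

theorem abscissaOfAbsConv_le_of_forall_dirichletConvAt (hc : 0 < c)
    (ha : ∀ᶠ n in atTop, c * ‖a n‖ ≤ (e * a n).re) {σ : ℝ}
    (h : ∀ x : ℝ, σ < x → DirichletConvAt a x) : abscissaOfAbsConv a ≤ σ := by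
  refine abscissaOfAbsConv_le_of_forall_lt_LSeriesSummable fun x hx ↦ ?_
  obtain ⟨l, hl⟩ := dirichletConvAt_iff.mp (h x hx)
  exact summable_of_tendsto_sum_range hc (ha.mono fun n hn ↦ mul_norm_term_le_re_mul_term hn x) hl

-- Replacing the finitely many coefficients that violate `ha` by `0` changes `LSeries a` by an
-- entire function.
theorem LSeriesSummable_sub_of_differentiableOn_ball (hc : 0 < c)
    (ha : ∀ᶠ n in atTop, c * ‖a n‖ ≤ (e * a n).re) {x₀ r ρ : ℝ}
    (hx₀ : abscissaOfAbsConv a < x₀) {f : ℂ → ℂ} (hf : DifferentiableOn ℂ f (Metric.ball x₀ r))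
    (hfa : f =ᶠ[𝓝 (x₀ : ℂ)] LSeries a) (hρ : 0 ≤ ρ) (hρr : ρ < r) :
    LSeriesSummable a (x₀ - ρ) := by
  obtain ⟨N, hN⟩ := eventually_atTop.mp ha
  set b : ℕ → ℂ := fun n ↦ if N ≤ n then a n else 0
  have hba : b =ᶠ[atTop] a := eventually_atTop.mpr ⟨N, fun n hn ↦ if_pos hn⟩
  have hb (n : ℕ) : c * ‖b n‖ ≤ (e * b n).re := by
    by_cases hn : N ≤ n
    · simpa only [b, if_pos hn] using hN n hn
    · simp [b, if_neg hn]
  have hab : a - b =ᶠ[atTop] 0 := hba.mono fun n hn ↦ by simp [hn]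
  have hbx₀ : abscissaOfAbsConv b < x₀ := abscissaOfAbsConv_congr' hba ▸ hx₀
  have hfb : f - LSeries (a - b) =ᶠ[𝓝 (x₀ : ℂ)] LSeries b := by
    have hax₀ : abscissaOfAbsConv a < (x₀ : ℂ).re := by simpa using hx₀
    filter_upwards [hfa, (isOpen_re_gt_EReal _).mem_nhds hax₀] with s hs hsa
    rw [Pi.sub_apply, hs, ← LSeries_sub (LSeriesSummable_of_abscissaOfAbsConv_lt_re hsa)
      ((LSeriesSummable_congr' s hab).mpr LSeriesSummable_zero), sub_sub_cancel]
  have hre := summable_re_mul_term_sub_of_differentiableOn_ball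
    (fun n ↦ (by positivity : 0 ≤ c * ‖b n‖).trans (hb n)) hbx₀
    (hf.sub (differentiable_of_eventually_eq_zero hab).differentiableOn) hfb hρ hρr
  refine (LSeriesSummable_congr' _ hba).mp (summable_of_summable_re_mul hc
    (Eventually.of_forall fun n ↦ ?_) hre)
  simpa using mul_norm_term_le_re_mul_term (hb n) (x₀ - ρ)

end LSeries

/-- Wedge version of the Landau–Fekete theorem: if the coefficients `a n` eventually lie in a
wedge of opening angle `< π` and the Dirichlet series `Σ a(n) n^{-s}` has finite abscissa of
convergence `σc`, then the series has a singularity at the real point `s = σc`: it cannot be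
continued analytically to any open neighborhood of `σc`. -/
theorem landau_fekete_wedge (a : ℕ → ℂ) (θ₁ θ₂ : ℝ) (h₁ : 0 ≤ θ₂ - θ₁) (h₂ : θ₂ - θ₁ < Real.pi)
    (hwedge : ∀ᶠ n in atTop, a n ∈ Wedge θ₁ θ₂)
    (σc : ℝ)
    (hconv : ∀ s : ℂ, σc < s.re → DirichletConvAt a s)
    (hdiv : ∀ s : ℂ, s.re < σc → ¬ DirichletConvAt a s) :
    ¬ ∃ (U : Set ℂ) (g : ℂ → ℂ), IsOpen U ∧ (σc : ℂ) ∈ U ∧ DifferentiableOn ℂ g U ∧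
        ∀ s ∈ U, σc < s.re → g s = DirichletSum a s := by
  rintro ⟨U, g, hU, hσU, hg, hgL⟩
  have hc : 0 < Real.cos ((θ₂ - θ₁) / 2) :=
    Real.cos_pos_of_mem_Ioo ⟨by linarith [Real.pi_pos], by linarith⟩
  have ha := hwedge.mono fun n hn ↦ cos_mul_norm_le_re_of_mem_Wedge (by linarith) hn
  have habs : LSeries.abscissaOfAbsConv a ≤ σc :=
    LSeries.abscissaOfAbsConv_le_of_forall_dirichletConvAt hc ha fun x hx ↦ hconv x (by simpa)
  obtain ⟨ε, hε, hball⟩ := Metric.isOpen_iff.mp hU σc hσU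
  -- Around `x₀ = σc + ε / 3`, the disc of radius `2ε / 3` lies in `U` and reaches left of `σc`.
  set x₀ : ℝ := σc + ε / 3 with hx₀
  have hsub : Metric.ball (x₀ : ℂ) (2 * ε / 3) ⊆ U := by
    have hdist : dist (x₀ : ℂ) σc = ε / 3 := by simp [x₀, abs_of_pos hε]
    exact (Metric.ball_subset_ball' (by linarith)).trans hball
  have hσx₀ : σc < x₀ := by linarith
  have hgL' : g =ᶠ[𝓝 (x₀ : ℂ)] LSeries a := by
    filter_upwards [hU.mem_nhds (hsub (Metric.mem_ball_self (by positivity))),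
      (isOpen_lt continuous_const continuous_re).mem_nhds (by simpa using hσx₀)] with s hsU hs
    rw [hgL s hsU hs, (LSeriesSummable_of_abscissaOfAbsConv_lt_re
      (habs.trans_lt (by exact_mod_cast hs))).dirichletSum_eq]
  have hsum := LSeries.LSeriesSummable_sub_of_differentiableOn_ball hc ha
    (habs.trans_lt (mod_cast hσx₀)) (hg.mono hsub) hgL' (by positivity : 0 ≤ ε / 2)
    (by linarith)
  exact hdiv _ (by simp only [sub_re, ofReal_re]; linarith) hsum.dirichletConvAt
end

section
/- Let f(z) = Σ_{n≥1} a(n) e^{2πinz} be a nonzero function holomorphic on the upper half-plane whose Fourier coefficients satisfy: the Dirichlet series Σ a(n) n^{−s} converges for Re(s) > σ₀ and extends to an entire function, and suppose a(n) lies in a wedge W(θ₁,θ₂) (opening < π) for all but finitely many n. Then the Dirichlet series Σ a(n)n^{−s} converges for every s ∈ ℂ, and in particular Σ |a(n)| n^{−s} < ∞ for all real s. -/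
open Complex Real Filter Topology

/-!
Multiplying by `e = exp (-iφ) / cos ω`, with `φ` the bisector and `ω < π/2` the half-opening of the
wedge, turns the wedge condition into `‖a n‖ ≤ Re (e · a n)` for large `n`. The coefficients
`d n = Re (e · a n)`, cut off below that point, are nonnegative, and their Dirichlet series still
converges on `Re s > σ₀` to an entire function, built from `(e g(s) + conj (e g(conj s))) / 2` by
subtracting a finite sum.

For nonnegative coefficients this forces absolute convergence everywhere (Landau): the entire
function minus the `N`-th partial sum is the L-series of the tail, whose derivatives at a real
point `c` of absolute convergence alternate in sign, so its value at any real `y ≤ c` is at least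
its nonnegative value at `c`. Thus the partial sums at `y` are bounded, and `∑ |a n| n^(-y)`
converges by comparison with `∑ d n n^(-y)`.
-/

open Finset LSeries
open scoped ComplexOrder ComplexConjugate

lemma exists_norm_le_re_mul_of_mem_wedge {θ₁ θ₂ : ℝ} (h : θ₂ - θ₁ < π) :
    ∃ e : ℂ, ∀ z ∈ Wedge θ₁ θ₂, ‖z‖ ≤ (e * z).re := by
  set φ := (θ₁ + θ₂) / 2 with hφ
  set ω := (θ₂ - θ₁) / 2 with hω
  refine ⟨exp (-φ * I) / Real.cos ω, ?_⟩
  rintro _ ⟨r, θ, hr, hθ₁, hθ₂, rfl⟩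
  have hcos_pos : 0 < Real.cos ω := Real.cos_pos_of_mem_Ioo ⟨by linarith, by linarith⟩
  have hcos_le : Real.cos ω ≤ Real.cos (θ - φ) := by
    rw [← Real.cos_abs (θ - φ)]
    exact Real.cos_le_cos_of_nonneg_of_le_pi (abs_nonneg _) (by linarith)
      (abs_le.mpr ⟨by linarith, by linarith⟩)
  have hrot : exp (-φ * I) / Real.cos ω * (r * exp (θ * I))
      = r * exp ((θ - φ : ℝ) * I) / Real.cos ω := by
    rw [div_mul_eq_mul_div, mul_left_comm, ← Complex.exp_add]
    push_cast
    ring_nf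
  rw [hrot, div_ofReal_re, re_ofReal_mul, exp_ofReal_mul_I_re, norm_mul, norm_exp_ofReal_mul_I,
    Complex.norm_of_nonneg hr, mul_one, le_div_iff₀ hcos_pos]
  exact mul_le_mul_of_nonneg_left hcos_le hr

lemma Complex.summable_of_nonneg_of_sum_range_le {u : ℕ → ℂ} (hu : 0 ≤ u) {C : ℂ}
    (h : ∀ N, ∑ n ∈ range N, u n ≤ C) : Summable u := by
  rw [funext fun n ↦ eq_re_of_ofReal_le (hu n), summable_ofReal]
  refine summable_of_sum_range_le (c := C.re) (fun n ↦ (le_def.mp (hu n)).1) fun N ↦ ?_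
  simpa using (le_def.mp (h N)).1

namespace LSeries

lemma sum_Icc_div_cpow_eq_sum_range_term (f : ℕ → ℂ) (s : ℂ) (N : ℕ) :
    ∑ n ∈ Icc 1 N, f n / (n : ℂ) ^ s = ∑ n ∈ range (N + 1), term f s n := by
  rw [range_eq_Ico, sum_eq_sum_Ico_succ_bot N.succ_pos, term_zero, zero_add]
  exact sum_congr rfl fun n hn ↦ (term_of_ne_zero (by simp at hn; omega) f s).symm

lemma tendsto_sum_Icc_div_cpow_iff (f : ℕ → ℂ) (s l : ℂ) :
    Tendsto (fun N ↦ ∑ n ∈ Icc 1 N, f n / (n : ℂ) ^ s) atTop (𝓝 l) ↔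
      Tendsto (fun N ↦ ∑ n ∈ range N, term f s n) atTop (𝓝 l) := by
  simp_rw [sum_Icc_div_cpow_eq_sum_range_term]
  exact tendsto_add_atTop_iff_nat (f := fun N ↦ ∑ n ∈ range N, term f s n) 1

lemma term_re_mul (f : ℕ → ℂ) (e s : ℂ) (n : ℕ) :
    term (fun n ↦ ((e * f n).re : ℂ)) s n
      = (e * term f s n + conj (e * term f (conj s) n)) / 2 := by
  rcases eq_or_ne n 0 with rfl | hn
  · simp
  have hconj : conj ((n : ℂ) ^ conj s) = (n : ℂ) ^ s := by
    rw [cpow_conj _ _ (by rw [natCast_arg]; exact pi_ne_zero.symm), conj_conj, conj_natCast]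
  simp only [term_of_ne_zero hn, re_eq_add_conj, map_mul, map_div₀, hconj]
  ring

lemma abscissaOfAbsConv_indicator_le (f : ℕ → ℂ) (S : Set ℕ) :
    abscissaOfAbsConv (S.indicator f) ≤ abscissaOfAbsConv f := by
  refine abscissaOfAbsConv_le_of_forall_lt_LSeriesSummable' fun y hy ↦ ?_
  exact (LSeriesSummable_of_abscissaOfAbsConv_lt_re (by simpa using hy)).norm.of_norm_bounded
    fun n ↦ norm_term_le _ (norm_indicator_le_norm_self f n)

end LSeries

lemma LSeriesSummable.of_eventually_norm_le {f g : ℕ → ℂ} {s : ℂ} (hg : LSeriesSummable g s)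
    (h : ∀ᶠ n in atTop, ‖f n‖ ≤ ‖g n‖) : LSeriesSummable f s :=
  hg.norm.of_norm_bounded_eventually (Nat.cofinite_eq_atTop ▸ h.mono fun _ ↦ norm_term_le s)

lemma LSeriesSummable.summable_norm_mul_rpow_neg {f : ℕ → ℂ} {σ : ℝ}
    (hf : LSeriesSummable f σ) : Summable fun n : ℕ ↦ ‖f n‖ * (n : ℝ) ^ (-σ) := by
  refine hf.norm.congr_cofinite ?_
  filter_upwards [Nat.cofinite_eq_atTop ▸ eventually_ne_atTop 0] with n hn
  rw [norm_term_eq, if_neg hn, ofReal_re, rpow_neg n.cast_nonneg, div_eq_mul_inv]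

lemma LSeriesSummable_of_nonneg_of_tendsto {f : ℕ → ℂ} (hf : 0 ≤ f) {x : ℝ} {l : ℂ}
    (h : Tendsto (fun N ↦ ∑ n ∈ range N, term f x n) atTop (𝓝 l)) : LSeriesSummable f x := by
  have hterm : 0 ≤ term f x := fun n ↦ term_nonneg (hf n) x
  exact summable_of_nonneg_of_sum_range_le hterm
    (((sum_mono_set_of_nonneg hterm).comp range_mono).ge_of_tendsto h)

lemma LSeries_eq_sum_range_add_LSeries_indicator {f : ℕ → ℂ} {s : ℂ} (hf : LSeriesSummable f s)
    (N : ℕ) : LSeries f s = ∑ n ∈ range N, term f s n + LSeries ((Set.Ici N).indicator f) s := by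
  have hterm : term ((Set.Ici N).indicator f) s = (Set.Ici N).indicator (term f s) := by
    ext n
    by_cases hn : n ∈ Set.Ici N <;> simp [term_def, hn]
  rw [LSeries, LSeries, hterm, ← _root_.tsum_subtype, ← Set.compl_Iio, ← coe_range,
    hf.sum_add_tsum_compl]

lemma LSeries.sum_range_term_le_of_nonneg_of_differentiable {a : ℕ → ℂ} (ha : 0 ≤ a)
    {F : ℂ → ℂ} (hF : Differentiable ℂ F) {x : ℝ} (hx : abscissaOfAbsConv a ≤ x)
    (hEq : {s | x < s.re}.EqOn F (LSeries a)) (y : ℝ) (N : ℕ) :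
    ∑ n ∈ range N, term a y n ≤ F y := by
  set G : ℂ → ℂ := fun s ↦ F s - ∑ n ∈ range N, term a s n
  set c : ℝ := max x y + 1
  have hxc : x < c := (le_max_left x y).trans_lt (lt_add_one _)
  have hU : IsOpen {s : ℂ | x < s.re} := continuous_re.isOpen_preimage _ isOpen_Ioi
  have hc : (c : ℂ) ∈ {s : ℂ | x < s.re} := by simpa using hxc
  have htail : 0 ≤ (Set.Ici N).indicator a := Set.indicator_nonneg fun n _ ↦ ha n
  have htail_abs : abscissaOfAbsConv ((Set.Ici N).indicator a) < c :=
    ((abscissaOfAbsConv_indicator_le a _).trans hx).trans_lt (by exact_mod_cast hxc)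
  have hG : Differentiable ℂ G :=
    hF.sub (Differentiable.fun_sum fun n _ s ↦ (hasDerivAt_term a n s).differentiableAt)
  have hG_tail : {s | x < s.re}.EqOn G (LSeries ((Set.Ici N).indicator a)) := fun s hs ↦ by
    have hsum : LSeriesSummable a s :=
      LSeriesSummable_of_abscissaOfAbsConv_lt_re (hx.trans_lt (by exact_mod_cast hs))
    simp only [G, hEq hs, LSeries_eq_sum_range_add_LSeries_indicator hsum N, add_sub_cancel_left]
  have hGc_le : G c ≤ G y := by
    refine hG.apply_le_of_iteratedDeriv_alternating (fun k _ ↦ ?_) ?_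
    · rw [hG_tail.iteratedDeriv_of_isOpen hU k hc]
      exact iteratedDeriv_alternating htail htail_abs k
    · exact_mod_cast (le_max_right x y).trans (lt_add_one _).le
  have hGc_nonneg : 0 ≤ G c := by
    rw [hG_tail hc]
    exact tsum_nonneg fun n ↦ term_nonneg (htail n) c
  exact sub_nonneg.mp (hGc_nonneg.trans hGc_le)

theorem LSeriesSummable_of_nonneg_of_differentiable {a : ℕ → ℂ} (ha : 0 ≤ a) {F : ℂ → ℂ}
    (hF : Differentiable ℂ F) {x : ℝ} (hx : abscissaOfAbsConv a ≤ x)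
    (hEq : {s | x < s.re}.EqOn F (LSeries a)) (y : ℝ) : LSeriesSummable a y :=
  summable_of_nonneg_of_sum_range_le (fun n ↦ term_nonneg (ha n) y)
    (sum_range_term_le_of_nonneg_of_differentiable ha hF hx hEq y)

namespace LSeries

def HasEntireContinuation (f : ℕ → ℂ) (σ₀ : ℝ) : Prop :=
  ∃ F : ℂ → ℂ, Differentiable ℂ F ∧
    ∀ s : ℂ, σ₀ < s.re → Tendsto (fun N ↦ ∑ n ∈ range N, term f s n) atTop (𝓝 (F s))

namespace HasEntireContinuation

variable {f : ℕ → ℂ} {σ₀ : ℝ}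

lemma re_mul (hf : HasEntireContinuation f σ₀) (e : ℂ) :
    HasEntireContinuation (fun n ↦ ((e * f n).re : ℂ)) σ₀ := by
  obtain ⟨F, hF, hlim⟩ := hf
  refine ⟨fun s ↦ (e * F s + conj (e * F (conj s))) / 2, ?_, fun s hs ↦ ?_⟩
  · refine ((hF.const_mul e).add fun s ↦ ?_).div_const 2
    exact (differentiableAt_conj_conj_iff (f := fun s ↦ e * F s)).mpr (hF.const_mul e _)
  · have hlim_conj := (continuous_conj.tendsto _).comp ((hlim (conj s) (by simpa)).const_mul e)
    simp_rw [term_re_mul, ← sum_div, sum_add_distrib, ← map_sum, ← mul_sum]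
    exact (((hlim s hs).const_mul e).add hlim_conj).div_const 2

lemma congr' {g : ℕ → ℂ} (hf : HasEntireContinuation f σ₀) (hfg : f =ᶠ[atTop] g) :
    HasEntireContinuation g σ₀ := by
  obtain ⟨F, hF, hlim⟩ := hf
  obtain ⟨M, hM⟩ := eventually_atTop.mp hfg
  refine ⟨fun s ↦ F s - ∑ n ∈ range M, (term f s n - term g s n), ?_, fun s hs ↦ ?_⟩
  · exact hF.sub (Differentiable.fun_sum fun n _ s ↦
      ((hasDerivAt_term f n s).sub (hasDerivAt_term g n s)).differentiableAt)
  refine ((hlim s hs).sub_const _).congr' ?_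
  filter_upwards [eventually_ge_atTop M] with N hN
  have hdiff : ∑ n ∈ range N, (term f s n - term g s n)
      = ∑ n ∈ range M, (term f s n - term g s n) :=
    (sum_subset (range_subset_range.mpr hN) fun n _ hnM ↦ by
      simp [term_def, hM n (by simpa using hnM)]).symm
  rw [← hdiff, sum_sub_distrib, sub_sub_cancel]

lemma abscissaOfAbsConv_le (hf : HasEntireContinuation f σ₀) (hf_nonneg : 0 ≤ f) :
    abscissaOfAbsConv f ≤ σ₀ := by
  obtain ⟨F, -, hlim⟩ := hf
  exact abscissaOfAbsConv_le_of_forall_lt_LSeriesSummable fun x hx ↦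
    LSeriesSummable_of_nonneg_of_tendsto hf_nonneg (hlim x (by simpa using hx))

theorem LSeriesSummable_of_nonneg (hf : HasEntireContinuation f σ₀) (hf_nonneg : 0 ≤ f)
    (y : ℝ) : LSeriesSummable f y := by
  have habs := hf.abscissaOfAbsConv_le hf_nonneg
  obtain ⟨F, hF, hlim⟩ := hf
  refine LSeriesSummable_of_nonneg_of_differentiable hf_nonneg hF habs (fun s hs ↦ ?_) y
  have hsum : LSeriesSummable f s :=
    LSeriesSummable_of_abscissaOfAbsConv_lt_re (habs.trans_lt (by exact_mod_cast hs))
  exact tendsto_nhds_unique (hlim s hs) hsum.LSeriesHasSum.tendsto_sum_nat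

end HasEntireContinuation

end LSeries

theorem wedge_entire_dirichlet_converges_everywhere_general
    (a : ℕ → ℂ)
    (σ₀ : ℝ)
    (g : ℂ → ℂ) (hg : Differentiable ℂ g)
    (hgagree : ∀ s : ℂ, σ₀ < s.re →
      Tendsto (fun N => ∑ n ∈ Finset.Icc 1 N, a n / (n : ℂ) ^ s) atTop (𝓝 (g s)))
    (θ₁ θ₂ : ℝ) (h₂ : θ₂ - θ₁ < Real.pi)
    (hwedge : ∀ᶠ n in atTop, a n ∈ Wedge θ₁ θ₂) :
    (∀ s : ℂ, DirichletConvAt a s) ∧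
      ∀ σ : ℝ, Summable (fun n : ℕ => ‖a n‖ * (n : ℝ) ^ (-σ)) := by
  have ha : HasEntireContinuation a σ₀ :=
    ⟨g, hg, fun s hs ↦ (tendsto_sum_Icc_div_cpow_iff a s _).mp (hgagree s hs)⟩
  obtain ⟨e, he⟩ := exists_norm_le_re_mul_of_mem_wedge h₂
  obtain ⟨M, hM⟩ := eventually_atTop.mp hwedge
  have hnorm_le (n : ℕ) (hn : M ≤ n) : ‖a n‖ ≤ (e * a n).re := he _ (hM n hn)
  set d : ℕ → ℂ := (Set.Ici M).indicator fun n ↦ ((e * a n).re : ℂ)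
  have hd_of_le (n : ℕ) (hn : M ≤ n) : d n = ((e * a n).re : ℂ) := Set.indicator_of_mem hn _
  have hd_nonneg : 0 ≤ d := Set.indicator_nonneg fun n hn ↦
    zero_le_real.mpr ((norm_nonneg _).trans (hnorm_le n hn))
  have hd : HasEntireContinuation d σ₀ := (ha.re_mul e).congr' <| by
    filter_upwards [eventually_ge_atTop M] with n hn
    exact (hd_of_le n hn).symm
  have hsum (s : ℂ) : LSeriesSummable a s := by
    rw [LSeriesSummable_iff_of_re_eq_re (s' := s.re) (ofReal_re _).symm]
    refine (hd.LSeriesSummable_of_nonneg hd_nonneg s.re).of_eventually_norm_le ?_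
    filter_upwards [eventually_ge_atTop M] with n hn
    rw [hd_of_le n hn, norm_real, Real.norm_eq_abs]
    exact (hnorm_le n hn).trans (le_abs_self _)
  exact ⟨fun s ↦ ⟨_, (tendsto_sum_Icc_div_cpow_iff a s _).mpr
    (hsum s).LSeriesHasSum.tendsto_sum_nat⟩, fun σ ↦ (hsum σ).summable_norm_mul_rpow_neg⟩

/-- If `f(z) = Σ_{n≥1} a(n) e^{2πinz}` is a nonzero holomorphic function on the upper half-plane
whose Dirichlet series `Σ a(n) n^{−s}` converges for `Re(s) > σ₀` and extends to an entire
function, and the coefficients `a n` eventually lie in a wedge of opening angle `< π`, then the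
Dirichlet series converges at every `s ∈ ℂ`, and `Σ |a(n)| n^{−σ} < ∞` for every real `σ`. -/
theorem wedge_entire_dirichlet_converges_everywhere
    (a : ℕ → ℂ) (ha0 : a 0 = 0) (f : ℂ → ℂ)
    (hf : DifferentiableOn ℂ f {z : ℂ | 0 < z.im})
    (hfa : ∀ z : ℂ, 0 < z.im → f z = ∑' n : ℕ, a n * Complex.exp (2 * Real.pi * Complex.I * n * z))
    (hfne : ∃ z : ℂ, 0 < z.im ∧ f z ≠ 0)
    (σ₀ : ℝ) (hconv : ∀ s : ℂ, σ₀ < s.re → DirichletConvAt a s)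
    (g : ℂ → ℂ) (hg : Differentiable ℂ g)
    (hgagree : ∀ s : ℂ, σ₀ < s.re →
      Tendsto (fun N => ∑ n ∈ Finset.Icc 1 N, a n / (n : ℂ) ^ s) atTop (𝓝 (g s)))
    (θ₁ θ₂ : ℝ) (h₁ : 0 ≤ θ₂ - θ₁) (h₂ : θ₂ - θ₁ < Real.pi)
    (hwedge : ∀ᶠ n in atTop, a n ∈ Wedge θ₁ θ₂) :
    (∀ s : ℂ, DirichletConvAt a s) ∧
      ∀ σ : ℝ, Summable (fun n : ℕ => ‖a n‖ * (n : ℝ) ^ (-σ)) :=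
  wedge_entire_dirichlet_converges_everywhere_general a σ₀ g hg hgagree θ₁ θ₂ h₂ hwedge
end
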